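/- The Mordell integral satisfies the modular inversion h(z/τ; −1/τ) = √(−iτ) · e^{−πiz²/τ} · h(z;τ) for z ∈ ℂ, τ ∈ ℍ. -/

import Mathlib

open Real MeasureTheory Complex

open Set

lemma aux_cosh_lower (t : ℝ) : 1 + t^2/2 ≤ Real.cosh t := by
  have h1 := Real.cosh_two_mul (t/2)
  rw [show 2*(t/2) = t by ring] at h1
  have h2 : Real.cosh (t/2) ^ 2 = Real.sinh (t/2) ^ 2 + 1 := Real.cosh_sq (t/2)
  have h3 : (t/2)^2 ≤ Real.sinh (t/2) ^ 2 := by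
    rcases le_or_gt 0 (t/2) with h | h
    · rcases eq_or_lt_of_le h with h' | h'
      · rw [← h']; simp
      · have := Real.self_lt_sinh_iff.mpr h'
        nlinarith
    · have h' : 0 < -(t/2) := by linarith
      have := Real.self_lt_sinh_iff.mpr h'
      rw [Real.sinh_neg] at this
      nlinarith
  nlinarith

lemma integrable_sech : Integrable fun y : ℝ => (Real.cosh (π*y))⁻¹ := by
  refine (integrable_inv_one_add_sq.const_mul 2).mono' ?_ ?_
  · exact (Real.continuous_cosh.comp (continuous_const.mul continuous_id)).inv₀
      (fun y => ne_of_gt (Real.cosh_pos _)) |>.aestronglyMeasurable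
  · refine Filter.Eventually.of_forall (fun y => ?_)
    have hc : 0 < Real.cosh (π*y) := Real.cosh_pos _
    have hl : 1 + (π*y)^2/2 ≤ Real.cosh (π*y) := aux_cosh_lower _
    rw [Real.norm_eq_abs, abs_of_pos (by positivity)]
    have hπ : (3:ℝ) ≤ π := Real.pi_gt_three.le
    have hπ2 : (9:ℝ) ≤ π^2 := by nlinarith
    have h9 : 9*y^2 ≤ (π*y)^2 := by rw [mul_pow]; nlinarith [mul_nonneg (by linarith : (0:ℝ) ≤ π^2 - 9) (sq_nonneg y)]
    have h2 : (1:ℝ) + y^2 ≤ 2 * (1 + (π*y)^2/2) := by nlinarith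
    rw [inv_le_comm₀ hc (by positivity)]
    have he : ((2:ℝ)*(1+y^2)⁻¹)⁻¹ = (1+y^2)/2 := by
      rw [mul_inv, inv_inv]; ring
    rw [he]
    linarith

lemma cpow_exp_aux (t : ℝ) (w : ℂ) : ((Real.exp t : ℝ) : ℂ) ^ w = Complex.exp (t * w) := by
  rw [Complex.cpow_def_of_ne_zero (by exact_mod_cast Real.exp_ne_zero t),
    ← Complex.ofReal_log (Real.exp_pos t).le, Real.log_exp]

lemma cpow_div_aux (a b : ℝ) (ha : 0 < a) (hb : 0 < b) (w : ℂ) :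
    ((a / b : ℝ) : ℂ) ^ w = (a:ℂ)^w / (b:ℂ)^w := by
  rw [Complex.cpow_def_of_ne_zero (by exact_mod_cast (div_pos ha hb).ne'),
    Complex.cpow_def_of_ne_zero (by exact_mod_cast ha.ne'),
    Complex.cpow_def_of_ne_zero (by exact_mod_cast hb.ne'),
    ← Complex.ofReal_log (div_pos ha hb).le, ← Complex.ofReal_log ha.le,
    ← Complex.ofReal_log hb.le, Real.log_div ha.ne' hb.ne', ← Complex.exp_sub]
  push_cast
  ring_nf

lemma beta_Ioi (s : ℂ) (h0 : 0 < s.re) (h1 : s.re < 1) :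
    ∫ u in Ioi (0:ℝ), (u:ℂ)^(s-1) / (1+u) = ↑π / Complex.sin (π*s) := by
  have himg : (fun t : ℝ => t/(1-t)) '' Ioo 0 1 = Ioi 0 := by
    ext u
    constructor
    · rintro ⟨t, ⟨ht0, ht1⟩, rfl⟩
      exact div_pos ht0 (by linarith)
    · intro hu
      have hu' : (0:ℝ) < u := hu
      refine ⟨u/(1+u), ⟨div_pos hu' (by linarith), (div_lt_one (by linarith)).2 (by linarith)⟩, ?_⟩
      have h1u : (1:ℝ) + u ≠ 0 := by positivity
      field_simp
      ring
  have hderiv : ∀ t ∈ Ioo (0:ℝ) 1, HasDerivWithinAt (fun t : ℝ => t/(1-t))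
      (((1-t)^2)⁻¹) (Ioo 0 1) t := by
    intro t ht
    have h1t : (1:ℝ) - t ≠ 0 := by
      have := ht.2; intro h'; linarith [sub_eq_zero.mp h']
    have := (hasDerivAt_id t).div ((hasDerivAt_id t).const_sub 1) h1t
    exact this.hasDerivWithinAt.congr_deriv (by simp only [id]; rw [inv_eq_one_div]; congr 1; ring)
  have hinj : InjOn (fun t : ℝ => t/(1-t)) (Ioo 0 1) := by
    rintro t₁ ⟨h10, h11⟩ t₂ ⟨h20, h21⟩ h
    have e1 : (1:ℝ) - t₁ ≠ 0 := by intro h'; linarith [sub_eq_zero.mp h']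
    have e2 : (1:ℝ) - t₂ ≠ 0 := by intro h'; linarith [sub_eq_zero.mp h']
    field_simp at h
    nlinarith [h]
  have key := integral_image_eq_integral_abs_deriv_smul measurableSet_Ioo hderiv hinj
      (fun u : ℝ => (u:ℂ)^(s-1)/(1+u))
  rw [himg] at key
  rw [key]
  have heq : ∀ t ∈ Ioo (0:ℝ) 1,
      |((1-t)^2)⁻¹| • (((t/(1-t):ℝ) : ℂ)^(s-1)/(1+((t/(1-t):ℝ):ℂ)))
        = (t:ℂ)^(s-1) * ((1:ℂ)-t)^((1-s)-1) := by
    intro t ht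
    rcases ht with ⟨ht0, ht1⟩
    have h1t : (0:ℝ) < 1 - t := by linarith
    have hw : ((1:ℂ) - t) ≠ 0 := by
      intro h
      have := congrArg Complex.re h
      simp at this
      linarith
    have hws : ((1:ℂ) - t) ^ s ≠ 0 := by
      simp [Complex.cpow_eq_zero_iff, hw]
    have hd : (1:ℂ) + ((t/(1-t):ℝ):ℂ) = ((1:ℂ)-t)⁻¹ := by
      push_cast
      field_simp
      ring
    rw [cpow_div_aux t (1-t) ht0 h1t, hd]
    have hcast : (((1-t:ℝ)):ℂ) = (1:ℂ) - (t:ℂ) := by push_cast; ring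
    rw [hcast]
    rw [Complex.cpow_sub _ _ hw, Complex.cpow_sub _ _ hw, Complex.cpow_sub _ _ hw,
      Complex.cpow_one]
    rw [abs_of_pos (by positivity), Complex.real_smul]
    push_cast
    have htne : (t:ℂ) ≠ 0 := by exact_mod_cast ht0.ne'
    field_simp
  rw [setIntegral_congr_fun measurableSet_Ioo heq]
  have hbeta : ∫ t in Ioo (0:ℝ) 1, (t:ℂ)^(s-1) * ((1:ℂ)-t)^((1-s)-1)
      = Complex.betaIntegral s (1-s) := by
    rw [Complex.betaIntegral, intervalIntegral.integral_of_le zero_le_one,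
      MeasureTheory.integral_Ioc_eq_integral_Ioo]
  rw [hbeta]
  have h1s : 0 < (1-s).re := by simp [Complex.sub_re]; linarith
  have hg := Complex.Gamma_mul_Gamma_eq_betaIntegral h0 h1s
  rw [show s + (1-s) = 1 by ring, Complex.Gamma_one, one_mul] at hg
  rw [← hg, Complex.Gamma_mul_Gamma_one_sub]

lemma complex_cosh_eq (z : ℂ) : Complex.cosh z = (Complex.exp z + Complex.exp (-z))/2 := rfl

lemma sech_fourier (y : ℝ) :
    ∫ x : ℝ, Complex.exp (-2*π*Complex.I*x*y) / Complex.cosh ((π:ℂ)*x)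
      = (Complex.cosh ((π:ℂ)*y))⁻¹ := by
  set s : ℂ := 1/2 - Complex.I*y with hs
  have hsre : s.re = 1/2 := by simp [hs]
  set g : ℝ → ℂ := fun u => ((u:ℂ)^(s-1)/(1+u))/π with hg
  have hπ : (0:ℝ) < 2*π := by positivity
  have hf' : ∀ x ∈ (univ : Set ℝ), HasDerivWithinAt (fun x : ℝ => Real.exp (2*π*x))
      ((2*π)*Real.exp (2*π*x)) univ x := by
    intro x _
    have h1 : HasDerivAt (fun x : ℝ => 2*π*x) (2*π) x := by
      simpa using (hasDerivAt_id x).const_mul (2*π)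
    have := h1.exp
    rw [hasDerivWithinAt_univ]
    exact this.congr_deriv (by ring)
  have hinj : InjOn (fun x : ℝ => Real.exp (2*π*x)) univ := by
    intro a _ b _ h
    have := Real.exp_injective h
    exact mul_left_cancel₀ (ne_of_gt hπ) this
  have himg : (fun x : ℝ => Real.exp (2*π*x)) '' univ = Ioi 0 := by
    rw [image_univ]
    ext u
    simp only [mem_range, mem_Ioi]
    constructor
    · rintro ⟨x, rfl⟩; exact Real.exp_pos _
    · intro hu
      exact ⟨Real.log u / (2*π), by rw [mul_div_cancel₀ _ (ne_of_gt hπ), Real.exp_log hu]⟩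
  have key := integral_image_eq_integral_abs_deriv_smul MeasurableSet.univ hf' hinj g
  rw [himg] at key
  have hpt : ∀ x : ℝ, |(2*π)*Real.exp (2*π*x)| • g (Real.exp (2*π*x))
      = Complex.exp (-2*π*Complex.I*x*y) / Complex.cosh ((π:ℂ)*x) := by
    intro x
    have hEne : Complex.exp ((π:ℂ)*x) ≠ 0 := Complex.exp_ne_zero _
    have hE2 : ((Real.exp (2*π*x):ℝ):ℂ) = Complex.exp ((π:ℂ)*x) * Complex.exp ((π:ℂ)*x) := by
      rw [Complex.ofReal_exp, ← Complex.exp_add]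
      norm_cast
      push_cast
      ring_nf
    have hexps : Complex.exp ((2*π*x:ℝ) * (s-1))
        = Complex.exp (-2*π*Complex.I*x*y) * (Complex.exp ((π:ℂ)*x))⁻¹ := by
      rw [← Complex.exp_neg, ← Complex.exp_add]
      congr 1
      rw [hs]
      push_cast
      ring
    have hden : (1:ℂ) + Complex.exp ((π:ℂ)*x) * Complex.exp ((π:ℂ)*x) ≠ 0 := by
      rw [← hE2]
      have : (1:ℂ) + ((Real.exp (2*π*x):ℝ):ℂ) = ((1 + Real.exp (2*π*x) : ℝ) : ℂ) := by push_cast; ring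
      rw [this]
      exact Complex.ofReal_ne_zero.mpr (by positivity)
    have hπC : ((π:ℝ):ℂ) ≠ 0 := Complex.ofReal_ne_zero.mpr (by positivity)
    have hsum : Complex.exp ((π:ℂ)*x) + (Complex.exp ((π:ℂ)*x))⁻¹ ≠ 0 := by
      intro h
      apply hden
      have h2 : (Complex.exp ((π:ℂ)*x) + (Complex.exp ((π:ℂ)*x))⁻¹) * Complex.exp ((π:ℂ)*x)
          = 1 + Complex.exp ((π:ℂ)*x) * Complex.exp ((π:ℂ)*x) := by
        field_simp
        ring
      rw [h, zero_mul] at h2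
      exact h2.symm
    have hcoef : ((2*π*Real.exp (2*π*x):ℝ):ℂ)
        = 2*(π:ℂ)*(Complex.exp ((π:ℂ)*x) * Complex.exp ((π:ℂ)*x)) := by
      rw [Complex.ofReal_mul, hE2, Complex.ofReal_mul]
      norm_num
    rw [hg]
    simp only []
    rw [cpow_exp_aux, abs_of_pos (by positivity), Complex.real_smul, hexps, hE2, hcoef,
      complex_cosh_eq, Complex.exp_neg]
    set E := Complex.exp ((π:ℂ)*(x:ℂ)) with hEdef
    have hden2 : (1:ℂ) + E^2 ≠ 0 := by rw [pow_two]; exact hden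
    field_simp [hden2]
    rw [eq_div_iff (show E^2+1 ≠ (0:ℂ) from by rwa [add_comm] at hden2)]
    ring
  calc ∫ x : ℝ, Complex.exp (-2*π*Complex.I*x*y) / Complex.cosh ((π:ℂ)*x)
      = ∫ x in (univ : Set ℝ), |(2*π)*Real.exp (2*π*x)| • g (Real.exp (2*π*x)) := by
        rw [setIntegral_univ]
        exact (integral_congr_ae (Filter.Eventually.of_forall (fun x => (hpt x)))).symm
    _ = ∫ u in Ioi (0:ℝ), g u := key.symm
    _ = (∫ u in Ioi (0:ℝ), (u:ℂ)^(s-1)/(1+u))/π := by rw [hg]; exact integral_div _ _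
    _ = (Complex.cosh ((π:ℂ)*y))⁻¹ := by
        rw [beta_Ioi s (by rw [hsre]; norm_num) (by rw [hsre]; norm_num)]
        have hsin : Complex.sin ((π:ℂ)*s) = Complex.cosh ((π:ℂ)*y) := by
          have h1 : (π:ℂ)*s = ↑π/2 - (((π*y:ℝ)):ℂ)*Complex.I := by
            rw [hs]; push_cast; ring
          rw [h1, Complex.sin_pi_div_two_sub, Complex.cos_mul_I]
          push_cast
          ring_nf
        rw [hsin]
        have hπC : ((π:ℝ):ℂ) ≠ 0 := Complex.ofReal_ne_zero.mpr (by positivity)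
        have hcne : Complex.cosh ((π:ℂ)*y) ≠ 0 := by
          have : Complex.cosh ((π:ℂ)*y) = ((Real.cosh (π*y) : ℝ) : ℂ) := by
            rw [Complex.ofReal_cosh]; push_cast; ring_nf
          rw [this]
          exact Complex.ofReal_ne_zero.mpr (ne_of_gt (Real.cosh_pos _))
        field_simp

/-- The Mordell integral `h(z;τ) = ∫_ℝ e^{πiτx² - 2πzx} / cosh(πx) dx`. -/
noncomputable def mordellH (z τ : ℂ) : ℂ :=
  ∫ x : ℝ, Complex.exp ((π : ℂ) * Complex.I * τ * (x : ℂ) ^ 2 - 2 * (π : ℂ) * z * (x : ℂ)) /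
    Complex.cosh ((π : ℂ) * (x : ℂ))

lemma cosh_pi_eq (y : ℝ) : Complex.cosh ((π:ℂ)*y) = ((Real.cosh (π*y) : ℝ) : ℂ) := by
  rw [Complex.ofReal_cosh]; push_cast; ring_nf

lemma cosh_pi_ne (y : ℝ) : Complex.cosh ((π:ℂ)*y) ≠ 0 := by
  rw [cosh_pi_eq]
  exact Complex.ofReal_ne_zero.mpr (ne_of_gt (Real.cosh_pos _))

lemma mordellH_even (z τ : ℂ) : mordellH (-z) τ = mordellH z τ := by
  have A : MeasurableEmbedding (fun x : ℝ => -x) := (Homeomorph.neg ℝ).measurableEmbedding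
  rw [mordellH, mordellH]
  have h1 : (∫ x : ℝ, Complex.exp ((π : ℂ) * Complex.I * τ * (x : ℂ) ^ 2 - 2 * (π : ℂ) * z * (x : ℂ)) /
      Complex.cosh ((π : ℂ) * (x : ℂ)))
      = ∫ x : ℝ, (fun x : ℝ => Complex.exp ((π : ℂ) * Complex.I * τ * (x : ℂ) ^ 2 - 2 * (π : ℂ) * z * (x : ℂ)) /
      Complex.cosh ((π : ℂ) * (x : ℂ))) (-x) := by
    conv_lhs => rw [← (show Measure.map (fun x : ℝ => -x) volume = volume from
      Measure.map_neg_eq_self volume)]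
    rw [A.integral_map]
  rw [h1]
  congr 1
  funext x
  simp only []
  push_cast
  rw [show (π:ℂ) * -↑x = -((π:ℂ)*↑x) from by ring, Complex.cosh_neg]
  congr 2
  ring

/-- Modular inversion: `h(z/τ; -1/τ) = √(-iτ) e^{-πiz²/τ} h(z;τ)`. -/
theorem mordellH_inversion (τ : ℂ) (hτ : 0 < τ.im) (z : ℂ) :
    mordellH (z / τ) (-1 / τ) =
      ((-Complex.I * τ) ^ ((1:ℂ)/2)) * Complex.exp (-(π : ℂ) * Complex.I * z ^ 2 / τ) *
        mordellH z τ := by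
  have hτne : τ ≠ 0 := by
    intro h; rw [h] at hτ; simp at hτ
  have hπC : ((π:ℝ):ℂ) ≠ 0 := Complex.ofReal_ne_zero.mpr (by positivity)
  set b : ℂ := -(π:ℂ)*Complex.I/τ with hb
  set c0 : ℂ := -2*(π:ℂ)*z/τ with hc0
  have hbre : b.re < 0 := by
    rw [hb, Complex.div_re]
    have h1 : (-(π:ℂ)*Complex.I).re = 0 := by simp
    have h2 : (-(π:ℂ)*Complex.I).im = -π := by simp
    rw [h1, h2]
    have h3 : 0 < Complex.normSq τ := Complex.normSq_pos.mpr hτne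
    have : -π * τ.im / Complex.normSq τ < 0 := by
      apply div_neg_of_neg_of_pos _ h3
      exact mul_neg_of_neg_of_pos (neg_neg_iff_pos.mpr pi_pos) hτ
    simpa using this
  set f : ℝ → ℝ → ℂ := fun x y =>
    Complex.exp (b*(x:ℂ)^2 + c0*(x:ℂ) - 2*(π:ℂ)*Complex.I*(x:ℂ)*(y:ℂ)) /
      Complex.cosh ((π:ℂ)*(y:ℂ)) with hf
  -- Step 1: LHS = iterated integral
  have step1 : mordellH (z/τ) (-1/τ) = ∫ x : ℝ, ∫ y : ℝ, f x y := by
    rw [mordellH]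
    congr 1
    funext x
    have e1 : (π:ℂ)*Complex.I*(-1/τ)*(x:ℂ)^2 - 2*(π:ℂ)*(z/τ)*(x:ℂ) = b*(x:ℂ)^2 + c0*(x:ℂ) := by
      rw [hb, hc0]; field_simp; ring
    rw [e1, div_eq_mul_inv, ← sech_fourier x, ← integral_const_mul]
    congr 1
    funext y
    rw [hf]
    simp only []
    rw [div_eq_mul_inv, div_eq_mul_inv, ← mul_assoc, ← Complex.exp_add]
    congr 2
    ring
  -- Step 2: integrability on the product
  have hcont : Continuous fun p : ℝ×ℝ => f p.1 p.2 := by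
    apply Continuous.div
    · apply Complex.continuous_exp.comp
      continuity
    · apply Complex.continuous_cosh.comp
      continuity
    · intro p
      exact cosh_pi_ne p.2
  have hnorm : ∀ p : ℝ×ℝ, ‖f p.1 p.2‖
      = ‖Complex.exp (b*(p.1:ℂ)^2 + c0*(p.1:ℂ))‖ * (Real.cosh (π*p.2))⁻¹ := by
    rintro ⟨x, y⟩
    rw [hf]
    simp only []
    rw [norm_div, cosh_pi_eq, Complex.norm_real, Real.norm_eq_abs,
      abs_of_pos (Real.cosh_pos _),
      Complex.norm_exp, Complex.norm_exp, div_eq_mul_inv]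
    congr 2
    simp [Complex.add_re, Complex.sub_re]
  have hint : Integrable (Function.uncurry f) ((volume : Measure ℝ).prod volume) := by
    have hg1 : Integrable fun x : ℝ => ‖Complex.exp (b*(x:ℂ)^2 + c0*(x:ℂ))‖ := by
      have := (integrable_cexp_quadratic' hbre c0 0).norm
      simpa using this
    have hgprod := hg1.mul_prod integrable_sech
    apply Integrable.mono' hgprod (hcont.aestronglyMeasurable)
    refine Filter.Eventually.of_forall (fun p => ?_)
    obtain ⟨x, y⟩ := p
    exact le_of_eq (hnorm ⟨x, y⟩)
  -- Step 3: swap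
  have step3 : (∫ x : ℝ, ∫ y : ℝ, f x y) = ∫ y : ℝ, ∫ x : ℝ, f x y :=
    integral_integral_swap hint
  -- Step 4: inner Gaussian integral
  have step4 : ∀ y : ℝ, (∫ x : ℝ, f x y)
      = ((-Complex.I * τ) ^ ((1:ℂ)/2)) * Complex.exp (-(π : ℂ) * Complex.I * z ^ 2 / τ) *
        (Complex.exp ((π:ℂ)*Complex.I*τ*(y:ℂ)^2 + 2*(π:ℂ)*z*(y:ℂ)) / Complex.cosh ((π:ℂ)*y)) := by
    intro y
    have e2 : ∀ x : ℝ, f x y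
        = Complex.exp (b*(x:ℂ)^2 + (c0 - 2*(π:ℂ)*Complex.I*(y:ℂ))*(x:ℂ) + 0)
          * (Complex.cosh ((π:ℂ)*y))⁻¹ := by
      intro x
      rw [hf]
      simp only []
      rw [div_eq_mul_inv]
      congr 2
      ring
    simp_rw [e2]
    rw [integral_mul_const, integral_cexp_quadratic hbre]
    have e3 : ((π:ℂ)/(-b)) = -Complex.I*τ := by
      rw [hb]
      field_simp
      linear_combination Complex.I_sq
    rw [e3]
    have e4 : Complex.exp (0 - (c0 - 2*(π:ℂ)*Complex.I*(y:ℂ))^2/(4*b))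
        = Complex.exp (-(π : ℂ) * Complex.I * z ^ 2 / τ)
          * Complex.exp ((π:ℂ)*Complex.I*τ*(y:ℂ)^2 + 2*(π:ℂ)*z*(y:ℂ)) := by
      rw [← Complex.exp_add]
      congr 1
      rw [hc0, hb]
      field_simp
      ring_nf
      rw [Complex.I_sq]
      ring
    rw [e4]
    ring
  rw [step1, step3]
  simp_rw [step4]
  rw [integral_const_mul]
  have : (∫ y : ℝ, Complex.exp ((π:ℂ)*Complex.I*τ*(y:ℂ)^2 + 2*(π:ℂ)*z*(y:ℂ)) /
      Complex.cosh ((π:ℂ)*y)) = mordellH z τ := by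
    rw [← mordellH_even, mordellH]
    congr 1
    funext y
    congr 2
    ring
  rw [this]
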